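/- For any point q = [1, q1 + q2·j] ∈ HP^1 with q1, q2 ∈ C, the fiber π^{-1}(q) of the twistor fibration is the projective line in CP^3 given by the equations z2 = z0·q1 − z1·conj(q2) and z3 = z0·q2 + z1·conj(q1). -/

import Mathlib

/-- Complex projective 3-space. -/
noncomputable abbrev CP3 := Projectivization ℂ (Fin 4 → ℂ)
/-- Left quaternionic projective line. -/
noncomputable abbrev HP1 := Projectivization (Quaternion ℝ) (Fin 2 → Quaternion ℝ)

/-- The conjugate-linear map `j(z0,z1,z2,z3) = (-conj z1, conj z0, -conj z3, conj z2)`. -/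
noncomputable def jMap (v : Fin 4 → ℂ) : Fin 4 → ℂ :=
  ![-(starRingEnd ℂ (v 1)), starRingEnd ℂ (v 0), -(starRingEnd ℂ (v 3)), starRingEnd ℂ (v 2)]

lemma jMap_ne_zero {v : Fin 4 → ℂ} (hv : v ≠ 0) : jMap v ≠ 0 := by
  intro h
  apply hv
  funext i
  have h0 := congrFun h 0
  have h1 := congrFun h 1
  have h2 := congrFun h 2
  have h3 := congrFun h 3
  simp only [jMap, Matrix.cons_val_zero, Matrix.cons_val_one, Matrix.head_cons,
    Matrix.cons_val_two, Matrix.cons_val_three, Matrix.tail_cons, Pi.zero_apply,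
    neg_eq_zero, map_eq_zero] at h0 h1 h2 h3
  fin_cases i <;> simp [h0, h1, h2, h3]

/-- The anti-holomorphic involution induced by `jMap` on `CP3`. -/
noncomputable def jProj (p : CP3) : CP3 :=
  Projectivization.mk ℂ (jMap p.rep) (jMap_ne_zero p.rep_nonzero)

/-- The complex number `a` viewed as a quaternion. -/
noncomputable def toQ (a : ℂ) : Quaternion ℝ := ⟨a.re, a.im, 0, 0⟩
/-- The quaternionic imaginary unit `j`. -/
noncomputable def qj : Quaternion ℝ := ⟨0, 0, 1, 0⟩

lemma cpair_eq (a b : ℂ) : toQ a + toQ b * qj = (⟨a.re, a.im, b.re, b.im⟩ : Quaternion ℝ) := by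
  ext <;> simp only [Quaternion.re_add, Quaternion.imI_add, Quaternion.imJ_add, Quaternion.imK_add,
    Quaternion.re_mul, Quaternion.imI_mul, Quaternion.imJ_mul, Quaternion.imK_mul] <;> simp [toQ, qj]

lemma cpair_eq_zero {a b : ℂ} (h : toQ a + toQ b * qj = 0) : a = 0 ∧ b = 0 := by
  rw [cpair_eq] at h
  have h' := Quaternion.ext_iff.mp h
  simp at h'
  constructor <;> [exact Complex.ext h'.1 h'.2.1; exact Complex.ext h'.2.2.1 h'.2.2.2]

/-- `(z0,z1,z2,z3) ↦ (z0 + z1 j, z2 + z3 j)`. -/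
noncomputable def piRaw (z : Fin 4 → ℂ) : Fin 2 → Quaternion ℝ :=
  ![toQ (z 0) + toQ (z 1) * qj, toQ (z 2) + toQ (z 3) * qj]

lemma piRaw_ne_zero {z : Fin 4 → ℂ} (hz : z ≠ 0) : piRaw z ≠ 0 := by
  intro h
  apply hz
  have h0 := cpair_eq_zero (congrFun h 0)
  have h1 := cpair_eq_zero (congrFun h 1)
  funext i
  fin_cases i <;> simp [h0.1, h0.2, h1.1, h1.2]

/-- The twistor fibration `π : CP3 → HP1`. -/
noncomputable def piProj (p : CP3) : HP1 :=
  Projectivization.mk (Quaternion ℝ) (piRaw p.rep) (piRaw_ne_zero p.rep_nonzero)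

/-- A projective line in `CP3`: the projectivization of a 2-dimensional subspace of `ℂ⁴`. -/
def IsProjLine (L : Set CP3) : Prop :=
  ∃ W : Submodule ℂ (Fin 4 → ℂ), Module.finrank ℂ ↥W = 2 ∧ L = {p | p.submodule ≤ W}

/-- A twistor line: a projective line invariant under the involution `j`. -/
def IsTwistorLine (L : Set CP3) : Prop := IsProjLine L ∧ jProj '' L = L

lemma toQ_mul (a b : ℂ) : toQ (a * b) = toQ a * toQ b := by
  ext <;> simp only [Quaternion.re_mul, Quaternion.imI_mul, Quaternion.imJ_mul,
    Quaternion.imK_mul] <;> simp [toQ, Quaternion.re_mul, Quaternion.imI_mul, Quaternion.imJ_mul,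
    Quaternion.imK_mul, Complex.mul_re, Complex.mul_im]

lemma toQ_ne_zero {a : ℂ} (h : a ≠ 0) : toQ a ≠ 0 := by
  intro h0
  apply h
  have := Quaternion.ext_iff.mp h0
  simp [toQ] at this
  exact Complex.ext this.1 this.2.1

lemma cpair_inj {a b c d : ℂ} (h : toQ a + toQ b * qj = toQ c + toQ d * qj) :
    a = c ∧ b = d := by
  rw [cpair_eq, cpair_eq] at h
  have h' := Quaternion.ext_iff.mp h
  simp at h'
  exact ⟨Complex.ext h'.1 h'.2.1, Complex.ext h'.2.2.1 h'.2.2.2⟩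

lemma key_mul (z0 z1 q1 q2 : ℂ) :
    (toQ z0 + toQ z1 * qj) * (toQ q1 + toQ q2 * qj)
      = toQ (z0 * q1 - z1 * starRingEnd ℂ q2) + toQ (z0 * q2 + z1 * starRingEnd ℂ q1) * qj := by
  rw [cpair_eq, cpair_eq, cpair_eq]
  ext <;> erw [QuaternionAlgebra.mk_mul_mk] <;>
    simp [Quaternion.re_mul, Quaternion.imI_mul, Quaternion.imJ_mul, Quaternion.imK_mul,
      Complex.mul_re, Complex.mul_im] <;> ring

lemma piRaw_smul (c : ℂ) (v : Fin 4 → ℂ) : piRaw (c • v) = toQ c • piRaw v := by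
  funext i
  fin_cases i <;>
    simp [piRaw, toQ_mul, mul_add, mul_assoc]

lemma piProj_mk (v : Fin 4 → ℂ) (hv : v ≠ 0) :
    piProj (Projectivization.mk ℂ v hv)
      = Projectivization.mk (Quaternion ℝ) (piRaw v) (piRaw_ne_zero hv) := by
  obtain ⟨a, ha⟩ := (Projectivization.mk_eq_mk_iff ℂ _ _ _ hv).mp
    (Projectivization.mk_rep (Projectivization.mk ℂ v hv))
  unfold piProj
  rw [Projectivization.mk_eq_mk_iff]
  refine ⟨Units.mk0 (toQ (a : ℂ)) (toQ_ne_zero a.ne_zero), ?_⟩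
  rw [← ha, Units.smul_def, Units.smul_def, Units.val_mk0, piRaw_smul]

/-- the fiber of `π` over `[1, q1 + q2 j]` is the projective line
`z2 = z0 q1 - z1 conj q2`, `z3 = z0 q2 + z1 conj q1`. -/
theorem stmt_2 :
    ∀ (q1 q2 : ℂ) (v : Fin 4 → ℂ) (hv : v ≠ 0)
      (hw : (![1, toQ q1 + toQ q2 * qj] : Fin 2 → Quaternion ℝ) ≠ 0),
      piProj (Projectivization.mk ℂ v hv)
          = Projectivization.mk (Quaternion ℝ) ![1, toQ q1 + toQ q2 * qj] hw
        ↔ (v 2 = v 0 * q1 - v 1 * starRingEnd ℂ q2 ∧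
           v 3 = v 0 * q2 + v 1 * starRingEnd ℂ q1) := by
  intro q1 q2 v hv hw
  rw [piProj_mk, Projectivization.mk_eq_mk_iff]
  constructor
  · rintro ⟨a, ha⟩
    have h0 := congrFun ha 0
    have h1 := congrFun ha 1
    simp only [Pi.smul_apply, Units.smul_def, smul_eq_mul, mul_one, piRaw,
      Matrix.cons_val_zero, Matrix.cons_val_one, Matrix.head_cons] at h0 h1
    rw [h0, key_mul] at h1
    exact ⟨(cpair_inj h1).1.symm, (cpair_inj h1).2.symm⟩
  · rintro ⟨h2, h3⟩
    have ha : toQ (v 0) + toQ (v 1) * qj ≠ 0 := by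
      intro h0
      apply hv
      obtain ⟨e0, e1⟩ := cpair_eq_zero h0
      funext i
      fin_cases i <;> simp [e0, e1, h2, h3]
    refine ⟨Units.mk0 _ ha, ?_⟩
    have hmul : (toQ (v 0) + toQ (v 1) * qj) * (toQ q1 + toQ q2 * qj)
        = toQ (v 2) + toQ (v 3) * qj := by
      rw [key_mul, ← h2, ← h3]
    funext i
    fin_cases i <;> simp [piRaw, Units.smul_def]
    exact (mul_add _ _ _).symm.trans hmul
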